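/- Every compact isodiametric set E in the Heisenberg group (i.e. E ∈ I) satisfies: for every p ∈ ∂E there exists q ∈ ∂E with d(p,q) = diam E. -/

import Mathlib

open scoped Real ENNReal
open MeasureTheory

noncomputable section

/-- The Heisenberg group `ℍⁿ`, identified with `ℂⁿ × ℝ` (with the Euclidean `ℓ²` norm on
the `ℂⁿ` factor). -/
abbrev Heis (n : ℕ) : Type := EuclideanSpace ℂ (Fin n) × ℝ

/-- Borel σ-algebra on `ℂⁿ`. -/
instance (n : ℕ) : MeasurableSpace (EuclideanSpace ℂ (Fin n)) := borel _

instance (n : ℕ) : BorelSpace (EuclideanSpace ℂ (Fin n)) := ⟨rfl⟩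

/-- Lebesgue measure on `ℂⁿ`. -/
instance (n : ℕ) : MeasureSpace (EuclideanSpace ℂ (Fin n)) :=
  ⟨Measure.map ((WithLp.equiv 2 (Fin n → ℂ)).symm) volume⟩

namespace Heis

/-- The Hermitian product `z ⬝ conj w = ∑ zⱼ conj(wⱼ)`. -/
def herm {n : ℕ} (z w : EuclideanSpace ℂ (Fin n)) : ℂ :=
  ∑ j, z j * (starRingEnd ℂ) (w j)

/-- The Heisenberg group law `[z,t]·[z',t'] = [z+z', t+t'+2 Im (z ⬝ conj z')]`. -/
def mul {n : ℕ} (p q : Heis n) : Heis n :=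
  (p.1 + q.1, p.2 + q.2 + 2 * (herm p.1 q.1).im)

/-- Dilations `δ_λ [z,t] = [λ z, λ² t]`. -/
def dilation {n : ℕ} (l : ℝ) (p : Heis n) : Heis n := (l • p.1, l ^ 2 * p.2)

/-- A `C¹` horizontal curve in the Heisenberg group: at every point the tangent vector lies
in the horizontal subbundle spanned by the left-invariant fields
`X_j = ∂_{x_j} + 2 y_j ∂_t`, `Y_j = ∂_{y_j} - 2 x_j ∂_t`, which amounts to
`t'(s) = 2 Im (z(s) ⬝ conj z'(s))`. -/
structure HorizCurve (n : ℕ) where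
  z : ℝ → EuclideanSpace ℂ (Fin n)
  t : ℝ → ℝ
  z' : ℝ → EuclideanSpace ℂ (Fin n)
  hz : ∀ s : ℝ, HasDerivAt z (z' s) s
  ht : ∀ s : ℝ, HasDerivAt t (2 * (herm (z s) (z' s)).im) s
  hz' : Continuous z'

/-- The sub-Riemannian length of a horizontal curve (the metric `g` makes the horizontal
frame orthonormal, so the length is the integral of the Euclidean norm of `z'`). -/
def HorizCurve.length {n : ℕ} (γ : HorizCurve n) : ℝ :=
  ∫ s in (0:ℝ)..1, ‖γ.z' s‖

/-- The Carnot–Carathéodory distance: the infimum of lengths of horizontal curves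
joining `p` to `q`. -/
def ccDist {n : ℕ} (p q : Heis n) : ℝ :=
  sInf { L : ℝ | ∃ γ : HorizCurve n, γ.z 0 = p.1 ∧ γ.t 0 = p.2 ∧
      γ.z 1 = q.1 ∧ γ.t 1 = q.2 ∧ L = γ.length }

/-- Open CC-ball. -/
def ccBall {n : ℕ} (p : Heis n) (r : ℝ) : Set (Heis n) := { q | ccDist p q < r }

/-- Closed CC-ball. -/
def ccClosedBall {n : ℕ} (p : Heis n) (r : ℝ) : Set (Heis n) := { q | ccDist p q ≤ r }

/-- CC-diameter of a set. -/
def ccDiam {n : ℕ} (F : Set (Heis n)) : ℝ :=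
  sSup { r : ℝ | ∃ p ∈ F, ∃ q ∈ F, r = ccDist p q }

/-- A set is CC-bounded if the pairwise CC-distances of its points are bounded. -/
def ccBounded {n : ℕ} (F : Set (Heis n)) : Prop :=
  ∃ M : ℝ, ∀ p ∈ F, ∀ q ∈ F, ccDist p q ≤ M

/-- The vertical segment joining two points with the same `ℂⁿ`-component. -/
def vseg {n : ℕ} (p q : Heis n) : Set (Heis n) :=
  { x | x.1 = p.1 ∧ x.2 ∈ Set.uIcc p.2 q.2 }

/-- The `t`-convex hull of a set. -/
def tco {n : ℕ} (F : Set (Heis n)) : Set (Heis n) :=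
  { x | ∃ p₁ ∈ F, ∃ p₂ ∈ F, p₁.1 = p₂.1 ∧ x ∈ vseg p₁ p₂ }

/-- A set is `t`-convex if it contains the vertical segment joining any two of its points
having the same `ℂⁿ`-component. -/
def TConvex {n : ℕ} (E : Set (Heis n)) : Prop :=
  ∀ p ∈ E, ∀ q ∈ E, p.1 = q.1 → vseg p q ⊆ E

/-- The rotation `r_θ [z,t] = [(e^{iθ₁} z₁, …, e^{iθₙ} zₙ), t]`. -/
def rot {n : ℕ} (θ : Fin n → ℝ) (p : Heis n) : Heis n :=
  ((WithLp.equiv 2 (Fin n → ℂ)).symm fun j => Complex.exp ((θ j : ℂ) * Complex.I) * p.1 j,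
    p.2)

/-- Rotationally invariant sets: the class `𝓡`. -/
def RotInvariant {n : ℕ} (F : Set (Heis n)) : Prop :=
  ∀ θ : Fin n → ℝ, rot θ '' F ⊆ F

/-- The reflection `σ [z,t] = [conj z, t]`. -/
def sigmaRefl {n : ℕ} (p : Heis n) : Heis n :=
  ((WithLp.equiv 2 (Fin n → ℂ)).symm fun j => (starRingEnd ℂ) (p.1 j), p.2)

/-- The Steiner symmetrization of a set with respect to the `ℂⁿ`-plane. -/
def steiner {n : ℕ} (F : Set (Heis n)) : Set (Heis n) :=
  { x | x.1 ∈ Prod.fst '' F ∧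
      2 * |x.2| ≤ (volume { s : ℝ | ((x.1, s) : Heis n) ∈ F }).toReal }

/-- The isodiametric constant `C_I`. -/
def CI (n : ℕ) : ℝ :=
  sSup { x : ℝ | ∃ F : Set (Heis n), ccBounded F ∧ 0 < ccDiam F ∧
    x = (volume F).toReal / (ccDiam F) ^ (2 * n + 2) }

/-- The isodiametric constant `C_{I,𝓡}` for the restricted problem in the class `𝓡`. -/
def CIR (n : ℕ) : ℝ :=
  sSup { x : ℝ | ∃ F : Set (Heis n), RotInvariant F ∧ ccBounded F ∧ 0 < ccDiam F ∧
    x = (volume F).toReal / (ccDiam F) ^ (2 * n + 2) }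

end Heis

/-!
Suppose some `p ∈ ∂E` is at distance `< diam E` from every point of `∂E`. The function
`d(p, ·)` has no local maximum where it is positive, since dilating about `p` by `l > 1` moves
`y` continuously to points at distance `l · d(p, y)`; so its maximum `M` over `E` is attained
on `∂E`, and `M < diam E`. Then `E ∪ B(p, (diam E - M)/2)` still has diameter `diam E`, but
strictly larger volume, since the ball meets the open set `Eᶜ` near `p`. This contradicts
`|E| = C_I (diam E)^(2n+2)`.

The properties of `d` used (triangle inequality, continuity, invariance under left translations
and dilations, and the volume bound that makes `C_I` finite) come from explicit horizontal
curves: a segment followed by a lifted circle joins any two points.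
-/

lemma MeasureTheory.Measure.prod_volume_setOf_abs_sub_le {X : Type*} [MeasurableSpace X]
    (μ : Measure X) [SFinite μ] {s : Set X} (hs : MeasurableSet s) {g : X → ℝ}
    (hg : Measurable g) (h : ℝ) :
    μ.prod volume {x : X × ℝ | x.1 ∈ s ∧ |x.2 - g x.1| ≤ h} = ENNReal.ofReal (2 * h) * μ s := by
  have hmeas : MeasurableSet {x : X × ℝ | x.1 ∈ s ∧ |x.2 - g x.1| ≤ h} :=
    (hs.preimage measurable_fst).inter
      (measurableSet_le ((measurable_snd.sub (hg.comp measurable_fst)).abs) measurable_const)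
  have hfiber (x : X) : volume (Prod.mk x ⁻¹' {x : X × ℝ | x.1 ∈ s ∧ |x.2 - g x.1| ≤ h})
      = s.indicator (fun _ => ENNReal.ofReal (2 * h)) x := by
    by_cases hx : x ∈ s
    · have : Prod.mk x ⁻¹' {x : X × ℝ | x.1 ∈ s ∧ |x.2 - g x.1| ≤ h}
          = Set.Icc (g x - h) (g x + h) := by
        ext t; simp [hx, abs_sub_le_iff, and_comm, add_comm]
      rw [this, Real.volume_Icc, Set.indicator_of_mem hx]; ring_nf
    · simp [hx]
  rw [Measure.prod_apply hmeas, lintegral_congr hfiber, lintegral_indicator_const hs]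

theorem IsCompact.exists_mem_frontier_isMaxOn {X β : Type*} [TopologicalSpace X]
    [LinearOrder β] [TopologicalSpace β] [ClosedIciTopology β] {E : Set X} {f : X → β}
    (hE : IsCompact E) (hf : ContinuousOn f E) {p : X} (hp : p ∈ frontier E)
    (hloc : ∀ y, f p < f y → ¬IsLocalMax f y) : ∃ q ∈ frontier E, IsMaxOn f E q := by
  obtain ⟨y, hyE, hy⟩ := hE.exists_isMaxOn (closure_nonempty_iff.1 ⟨p, hp.1⟩) hf
  by_cases hyf : y ∈ frontier E
  · exact ⟨y, hyf, hy⟩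
  have hyi : y ∈ interior E := by
    by_contra h
    exact hyf ⟨subset_closure hyE, h⟩
  have hyp : f y ≤ f p :=
    not_lt.1 fun h => hloc y h (hy.isLocalMax (mem_interior_iff_mem_nhds.1 hyi))
  exact ⟨p, hp, fun x hx => (hy hx).trans hyp⟩

theorem MeasureTheory.Measure.lt_measure_union_of_mem_frontier {X : Type*} [TopologicalSpace X]
    [MeasurableSpace X] [OpensMeasurableSpace X] {μ : Measure X} [μ.IsOpenPosMeasure]
    {E U : Set X} (hE : IsClosed E) (hμE : μ E ≠ ⊤) (hU : IsOpen U) {p : X}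
    (hp : p ∈ frontier E) (hpU : p ∈ U) : μ E < μ (E ∪ U) := by
  have hpos : 0 < μ (U \ E) := by
    refine (hU.sdiff hE).measure_pos μ ?_
    have : p ∈ closure Eᶜ := by rw [closure_compl]; exact hp.2
    exact (mem_closure_iff.1 this U hU hpU).mono fun x hx => ⟨hx.1, hx.2⟩
  rw [← Set.union_sdiff_self, measure_union Set.disjoint_sdiff_right (hU.measurableSet.diff
    hE.measurableSet)]
  exact ENNReal.lt_add_right hμE hpos.ne'

lemma hasDerivAt_one_sub (s : ℝ) : HasDerivAt (fun s : ℝ => 1 - s) (-1) s := by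
  simpa using (hasDerivAt_id s).const_sub 1

namespace Heis

variable {n : ℕ}

section Herm

lemma herm_eq_inner (z w : EuclideanSpace ℂ (Fin n)) : herm z w = inner ℂ w z := by
  simp [herm, PiLp.inner_apply, RCLike.inner_apply]

lemma im_herm_eq_neg_im_inner (z w : EuclideanSpace ℂ (Fin n)) :
    (herm z w).im = -(inner ℂ z w).im := by
  rw [herm_eq_inner, ← inner_conj_symm, Complex.conj_im]

lemma herm_add_left (z z' w : EuclideanSpace ℂ (Fin n)) :
    herm (z + z') w = herm z w + herm z' w := by
  simp [herm_eq_inner]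

lemma herm_add_right (z w w' : EuclideanSpace ℂ (Fin n)) :
    herm z (w + w') = herm z w + herm z w' := by
  simp [herm_eq_inner]

lemma herm_sub_left (z z' w : EuclideanSpace ℂ (Fin n)) :
    herm (z - z') w = herm z w - herm z' w := by
  simp [herm_eq_inner]

lemma herm_neg_left (z w : EuclideanSpace ℂ (Fin n)) : herm (-z) w = -herm z w := by
  simp [herm_eq_inner, inner_neg_right]

lemma herm_neg_right (z w : EuclideanSpace ℂ (Fin n)) : herm z (-w) = -herm z w := by
  simp [herm_eq_inner, inner_neg_left]

@[simp] lemma herm_zero_right (z : EuclideanSpace ℂ (Fin n)) : herm z 0 = 0 := by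
  simp [herm]

lemma im_herm_self (z : EuclideanSpace ℂ (Fin n)) : (herm z z).im = 0 := by
  simp [herm_eq_inner, ← Complex.ofReal_pow]

lemma im_herm_smul_left (a : ℝ) (z w : EuclideanSpace ℂ (Fin n)) :
    (herm (a • z) w).im = a * (herm z w).im := by
  simp [herm_eq_inner]

lemma im_herm_smul_right (a : ℝ) (z w : EuclideanSpace ℂ (Fin n)) :
    (herm z (a • w)).im = a * (herm z w).im := by
  simp [herm_eq_inner]

lemma abs_im_herm_le (z w : EuclideanSpace ℂ (Fin n)) : |(herm z w).im| ≤ ‖z‖ * ‖w‖ := by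
  rw [herm_eq_inner, mul_comm]
  exact (Complex.abs_im_le_norm _).trans (norm_inner_le_norm w z)

@[fun_prop]
lemma _root_.Continuous.herm {X : Type*} [TopologicalSpace X] {f g : X → EuclideanSpace ℂ (Fin n)}
    (hf : Continuous f) (hg : Continuous g) : Continuous fun x => herm (f x) (g x) := by
  simp only [herm_eq_inner]
  exact hg.inner hf

def imHermCLM (z : EuclideanSpace ℂ (Fin n)) : EuclideanSpace ℂ (Fin n) →L[ℝ] ℝ :=
  (-2 : ℝ) • (Complex.imCLM.comp ((innerSL ℂ z).restrictScalars ℝ))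

lemma imHermCLM_apply (z w : EuclideanSpace ℂ (Fin n)) :
    imHermCLM z w = 2 * (herm z w).im := by
  simp [imHermCLM, im_herm_eq_neg_im_inner]

end Herm

namespace HorizCurve

variable (γ : HorizCurve n)

def source : Heis n := (γ.z 0, γ.t 0)

def target : Heis n := (γ.z 1, γ.t 1)

lemma continuous_z : Continuous γ.z :=
  continuous_iff_continuousAt.2 fun s => (γ.hz s).continuousAt

lemma length_nonneg : 0 ≤ γ.length :=
  intervalIntegral.integral_nonneg zero_le_one fun _ _ => norm_nonneg _

lemma z_sub_z_eq_integral (a b : ℝ) : γ.z b - γ.z a = ∫ s in a..b, γ.z' s :=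
  (intervalIntegral.integral_eq_sub_of_hasDerivAt (fun s _ => γ.hz s)
    (γ.hz'.intervalIntegrable _ _)).symm

lemma t_sub_t_eq_integral (a b : ℝ) :
    γ.t b - γ.t a = ∫ s in a..b, 2 * (herm (γ.z s) (γ.z' s)).im :=
  (intervalIntegral.integral_eq_sub_of_hasDerivAt (fun s _ => γ.ht s)
    (by apply Continuous.intervalIntegrable; have := γ.continuous_z; have := γ.hz'; fun_prop)).symm

lemma norm_z_sub_z_zero_le_length {s : ℝ} (hs : s ∈ Set.Icc (0 : ℝ) 1) :
    ‖γ.z s - γ.z 0‖ ≤ γ.length := by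
  rw [γ.z_sub_z_eq_integral 0 s]
  refine (intervalIntegral.norm_integral_le_integral_norm hs.1).trans ?_
  refine intervalIntegral.integral_mono_interval le_rfl hs.1 hs.2 ?_ ?_
  · exact Filter.Eventually.of_forall fun _ => norm_nonneg _
  · exact γ.hz'.norm.intervalIntegrable _ _

lemma norm_target_sub_source_le : ‖γ.target.1 - γ.source.1‖ ≤ γ.length :=
  γ.norm_z_sub_z_zero_le_length ⟨zero_le_one, le_rfl⟩

end HorizCurve

/-- The `t`-coordinate of `p⁻¹ · q`. -/
def height (p q : Heis n) : ℝ := q.2 - p.2 - 2 * (herm p.1 (q.1 - p.1)).im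

lemma height_self (p : Heis n) : height p p = 0 := by
  simp [height]

@[fun_prop]
lemma _root_.Continuous.height {X : Type*} [TopologicalSpace X] {f g : X → Heis n}
    (hf : Continuous f) (hg : Continuous g) : Continuous fun x => Heis.height (f x) (g x) := by
  unfold Heis.height; fun_prop

/-- Subtracting the contribution of the chord from `z(0)` to `z(1)` leaves
`∫ 2 Im ⟨z(s) - z(0), z'(s)⟩`, whose integrand is at most `2 ‖z(s) - z(0)‖ ‖z'(s)‖`. -/
lemma HorizCurve.abs_height_le (γ : HorizCurve n) :
    |height γ.source γ.target| ≤ 2 * γ.length ^ 2 := by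
  have hchord : 2 * (herm (γ.z 0) (γ.z 1 - γ.z 0)).im
      = ∫ s in (0 : ℝ)..1, 2 * (herm (γ.z 0) (γ.z' s)).im := by
    simp only [← imHermCLM_apply, γ.z_sub_z_eq_integral 0 1]
    exact ((imHermCLM _).intervalIntegral_comp_comm (γ.hz'.intervalIntegrable _ _)).symm
  have hcz := γ.continuous_z
  have hcz' := γ.hz'
  have hheight : height γ.source γ.target
      = ∫ s in (0 : ℝ)..1, 2 * (herm (γ.z s - γ.z 0) (γ.z' s)).im := by
    rw [height, HorizCurve.source, HorizCurve.target, γ.t_sub_t_eq_integral 0 1, hchord,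
      ← intervalIntegral.integral_sub (by apply Continuous.intervalIntegrable; fun_prop)
        (by apply Continuous.intervalIntegrable; fun_prop)]
    simp only [herm_sub_left, Complex.sub_im]
    ring_nf
  rw [hheight]
  calc |∫ s in (0 : ℝ)..1, 2 * (herm (γ.z s - γ.z 0) (γ.z' s)).im|
      ≤ ∫ s in (0 : ℝ)..1, |2 * (herm (γ.z s - γ.z 0) (γ.z' s)).im| :=
        intervalIntegral.abs_integral_le_integral_abs zero_le_one
    _ ≤ ∫ s in (0 : ℝ)..1, 2 * γ.length * ‖γ.z' s‖ := by
        refine intervalIntegral.integral_mono_on zero_le_one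
          (by apply Continuous.intervalIntegrable; fun_prop)
          (by apply Continuous.intervalIntegrable; fun_prop) fun s hs => ?_
        rw [abs_mul, abs_two, mul_assoc]
        gcongr
        exact (abs_im_herm_le _ _).trans
          (by gcongr; exact γ.norm_z_sub_z_zero_le_length hs)
    _ = 2 * γ.length ^ 2 := by
        rw [intervalIntegral.integral_const_mul, HorizCurve.length]; ring

namespace HorizCurve

def const (p : Heis n) : HorizCurve n where
  z _ := p.1
  t _ := p.2
  z' _ := 0
  hz s := hasDerivAt_const s p.1
  ht s := by simpa using hasDerivAt_const s p.2
  hz' := continuous_const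

@[simp] lemma const_source (p : Heis n) : (const p).source = p := rfl

@[simp] lemma const_target (p : Heis n) : (const p).target = p := rfl

@[simp] lemma const_length (p : Heis n) : (const p).length = 0 := by
  simp [const, length]

def segment (p q : Heis n) : HorizCurve n where
  z s := p.1 + s • (q.1 - p.1)
  t s := p.2 + s * (2 * (herm p.1 (q.1 - p.1)).im)
  z' _ := q.1 - p.1
  hz s := by simpa using ((hasDerivAt_id s).smul_const (q.1 - p.1)).const_add p.1
  ht s := (((hasDerivAt_id s).mul_const _).const_add p.2).congr_deriv <| by
    rw [herm_add_left, Complex.add_im, im_herm_smul_left, im_herm_self]; ring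
  hz' := continuous_const

@[simp] lemma segment_source (p q : Heis n) : (segment p q).source = p := by
  simp [segment, source]

@[simp] lemma segment_target (p q : Heis n) :
    (segment p q).target = (q.1, p.2 + 2 * (herm p.1 (q.1 - p.1)).im) := by
  simp [segment, target]

lemma segment_length (p q : Heis n) : (segment p q).length = ‖q.1 - p.1‖ := by
  simp [length, segment]

section Loop

/-! The loop `loop w t₀ T` projects to a circle of radius `R` run once in the first
coordinate of `ℂⁿ`; a horizontal lift of a closed plane curve rises by four times the signed
area it encloses, so `R = √(|T| / 4π)` gives height `T` and length `2πR = √(π |T|)`. -/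

def loopFreq (T : ℝ) : ℝ := if 0 ≤ T then -(2 * π) else 2 * π

def loopRadius (T : ℝ) : ℝ := √(|T| / (4 * π))

def loopPlane (T s : ℝ) : ℂ := loopRadius T * (Complex.exp (↑(loopFreq T * s) * Complex.I) - 1)

def loopPlaneDeriv (T s : ℝ) : ℂ :=
  loopRadius T * (loopFreq T * Complex.I * Complex.exp (↑(loopFreq T * s) * Complex.I))

def loopHeight (T s : ℝ) : ℝ :=
  loopRadius T ^ 2 * (2 * Real.sin (loopFreq T * s) - 2 * (loopFreq T * s))

lemma loopRadius_sq (T : ℝ) : loopRadius T ^ 2 = |T| / (4 * π) :=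
  Real.sq_sqrt (by positivity)

lemma abs_loopFreq (T : ℝ) : |loopFreq T| = 2 * π := by
  unfold loopFreq; split_ifs <;> simp [abs_of_pos Real.pi_pos]

lemma exp_loopFreq_mul_I (T : ℝ) : Complex.exp (↑(loopFreq T) * Complex.I) = 1 := by
  rw [Complex.exp_eq_one_iff]
  unfold loopFreq
  split_ifs
  · exact ⟨-1, by push_cast; ring⟩
  · exact ⟨1, by push_cast; ring⟩

lemma hasDerivAt_loopPlane (T s : ℝ) : HasDerivAt (loopPlane T) (loopPlaneDeriv T s) s := by
  have h := (((hasDerivAt_id s).const_mul (loopFreq T)).ofReal_comp.mul_const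
    Complex.I).cexp.sub_const 1 |>.const_mul (loopRadius T : ℂ)
  exact h.congr_deriv (by simp only [id, mul_one, loopPlaneDeriv]; ring)

lemma hasDerivAt_loopHeight (T s : ℝ) : HasDerivAt (loopHeight T)
    (loopRadius T ^ 2 * (2 * (Real.cos (loopFreq T * s) * loopFreq T) - 2 * loopFreq T)) s := by
  have h := (hasDerivAt_id s).const_mul (loopFreq T)
  simp only [id, mul_one] at h
  exact (((Real.hasDerivAt_sin _).comp s h).const_mul 2 |>.sub (h.const_mul 2)).const_mul _

lemma im_loopPlane_mul_conj (T s : ℝ) :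
    (loopPlane T s * starRingEnd ℂ (loopPlaneDeriv T s)).im
      = loopRadius T ^ 2 * loopFreq T * (Real.cos (loopFreq T * s) - 1) := by
  have key : ∀ (R ω : ℝ) (u : ℂ), u * starRingEnd ℂ u = 1 →
      R * (u - 1) * starRingEnd ℂ (R * (ω * Complex.I * u))
        = ↑(R ^ 2 * ω) * ((starRingEnd ℂ u - 1) * Complex.I) := by
    intro R ω u hu
    simp only [map_mul, Complex.conj_ofReal, Complex.conj_I]
    push_cast
    linear_combination (-(R : ℂ) ^ 2 * ω * Complex.I) * hu
  have hu : Complex.exp (↑(loopFreq T * s) * Complex.I)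
      * starRingEnd ℂ (Complex.exp (↑(loopFreq T * s) * Complex.I)) = 1 := by
    rw [Complex.mul_conj, Complex.normSq_eq_norm_sq, Complex.norm_exp_ofReal_mul_I]; simp
  rw [loopPlane, loopPlaneDeriv, key _ _ _ hu]
  simp only [Complex.mul_im, Complex.ofReal_re, Complex.ofReal_im, Complex.mul_I_re,
    Complex.sub_re, Complex.sub_im, Complex.conj_re, Complex.conj_im, Complex.one_re,
    Complex.one_im, Complex.I_re, Complex.I_im, Complex.exp_ofReal_mul_I_re]
  ring

lemma herm_smul_single [NeZero n] (a b : ℂ) :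
    herm (a • EuclideanSpace.single (0 : Fin n) 1) (b • EuclideanSpace.single 0 1)
      = a * starRingEnd ℂ b := by
  simp [herm_eq_inner]

variable [NeZero n]

def loop (w : EuclideanSpace ℂ (Fin n)) (t₀ T : ℝ) : HorizCurve n where
  z s := w + loopPlane T s • EuclideanSpace.single 0 1
  t s := t₀ + imHermCLM w (loopPlane T s • EuclideanSpace.single 0 1) + loopHeight T s
  z' s := loopPlaneDeriv T s • EuclideanSpace.single 0 1
  hz s := ((hasDerivAt_loopPlane T s).smul_const _).const_add w
  ht s := by
    refine ((imHermCLM w).hasFDerivAt.comp_hasDerivAt s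
      ((hasDerivAt_loopPlane T s).smul_const _) |>.const_add t₀ |>.add
      (hasDerivAt_loopHeight T s)).congr_deriv ?_
    rw [imHermCLM_apply, herm_add_left, herm_smul_single, Complex.add_im,
      im_loopPlane_mul_conj]
    ring
  hz' := by unfold loopPlaneDeriv; fun_prop

@[simp] lemma loopPlane_zero (T : ℝ) : loopPlane T 0 = 0 := by
  simp [loopPlane]

@[simp] lemma loopPlane_one (T : ℝ) : loopPlane T 1 = 0 := by
  simp [loopPlane, exp_loopFreq_mul_I]

@[simp] lemma loop_source (w : EuclideanSpace ℂ (Fin n)) (t₀ T : ℝ) :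
    (loop w t₀ T).source = (w, t₀) := by
  simp [loop, source, loopHeight]

@[simp] lemma loop_target (w : EuclideanSpace ℂ (Fin n)) (t₀ T : ℝ) :
    (loop w t₀ T).target = (w, t₀ + T) := by
  simp only [loop, target, loopPlane_one, zero_smul, add_zero, map_zero, Prod.mk.injEq, true_and]
  rw [loopHeight, loopRadius_sq]
  unfold loopFreq
  split_ifs with hT
  · rw [mul_one, Real.sin_neg, Real.sin_two_pi, abs_of_nonneg hT]
    field_simp; ring
  · rw [mul_one, Real.sin_two_pi, abs_of_neg (not_le.1 hT)]
    field_simp; ring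

lemma loop_length (w : EuclideanSpace ℂ (Fin n)) (t₀ T : ℝ) :
    (loop w t₀ T).length = √(π * |T|) := by
  have hnorm : ∀ s, ‖(loop w t₀ T).z' s‖ = loopRadius T * (2 * π) := fun s => by
    simp only [loop, loopPlaneDeriv, norm_smul, PiLp.norm_single, norm_one, mul_one,
      norm_mul, Complex.norm_real, Real.norm_eq_abs, Complex.norm_I,
      Complex.norm_exp_ofReal_mul_I, abs_loopFreq, abs_of_nonneg (Real.sqrt_nonneg _), loopRadius]
  rw [length, intervalIntegral.integral_congr fun s _ => hnorm s]
  rw [intervalIntegral.integral_const, smul_eq_mul, sub_zero, one_mul,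
    show π * |T| = |T| / (4 * π) * (2 * π) ^ 2 by field_simp; ring,
    Real.sqrt_mul (by positivity), Real.sqrt_sq (by positivity), loopRadius]

end Loop

section Append

/-! Concatenation runs each half at speed `reparamDeriv`, which vanishes at the junction, so
the glued curve is again `C¹`. -/

def reparam (u : ℝ) : ℝ := u - Real.sin (2 * π * u) / (2 * π)

def reparamDeriv (u : ℝ) : ℝ := 1 - Real.cos (2 * π * u)

@[simp] lemma reparam_zero : reparam 0 = 0 := by simp [reparam]

@[simp] lemma reparam_one : reparam 1 = 1 := by simp [reparam]

@[simp] lemma reparamDeriv_zero : reparamDeriv 0 = 0 := by simp [reparamDeriv]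

@[simp] lemma reparamDeriv_one : reparamDeriv 1 = 0 := by simp [reparamDeriv]

lemma reparamDeriv_nonneg (u : ℝ) : 0 ≤ reparamDeriv u :=
  sub_nonneg.2 (Real.cos_le_one _)

@[fun_prop] lemma continuous_reparam : Continuous reparam := by
  unfold reparam; fun_prop

@[fun_prop] lemma continuous_reparamDeriv : Continuous reparamDeriv := by
  unfold reparamDeriv; fun_prop

lemma hasDerivAt_reparam (u : ℝ) : HasDerivAt reparam (reparamDeriv u) u := by
  have h := (hasDerivAt_id u).const_mul (2 * π)
  simp only [id, mul_one] at h
  refine ((hasDerivAt_id u).sub (((Real.hasDerivAt_sin _).comp u h).div_const _)).congr_deriv ?_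
  field_simp
  rw [reparamDeriv]

lemma hasDerivAt_reparam_two_mul_sub (a s : ℝ) :
    HasDerivAt (fun s => reparam (2 * s - a)) (2 * reparamDeriv (2 * s - a)) s := by
  have h := ((hasDerivAt_id s).const_mul 2).sub_const a
  simp only [id, mul_one] at h
  have h' := (hasDerivAt_reparam _).comp s h
  rwa [mul_comm] at h'

variable {X : Type*} [NormedAddCommGroup X] [NormedSpace ℝ X]

def glue (f₁ f₂ : ℝ → X) (s : ℝ) : X :=
  if s ≤ 1 / 2 then f₁ (reparam (2 * s)) else f₂ (reparam (2 * s - 1))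

def glueDeriv (d₁ d₂ : ℝ → X) (s : ℝ) : X :=
  if s ≤ 1 / 2 then (2 * reparamDeriv (2 * s)) • d₁ (reparam (2 * s))
  else (2 * reparamDeriv (2 * s - 1)) • d₂ (reparam (2 * s - 1))

lemma hasDerivAt_glue {f₁ f₂ d₁ d₂ : ℝ → X} (h₁ : ∀ u, HasDerivAt f₁ (d₁ u) u)
    (h₂ : ∀ u, HasDerivAt f₂ (d₂ u) u) (h : f₁ 1 = f₂ 0) (s : ℝ) :
    HasDerivAt (glue f₁ f₂) (glueDeriv d₁ d₂ s) s := by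
  have left (s : ℝ) := (h₁ _).scomp s (by simpa using hasDerivAt_reparam_two_mul_sub 0 s)
  have right (s : ℝ) := (h₂ _).scomp s (hasDerivAt_reparam_two_mul_sub 1 s)
  rcases lt_trichotomy s (1 / 2) with hs | rfl | hs
  · rw [glueDeriv, if_pos hs.le]
    refine (left s).congr_of_eventuallyEq ?_
    filter_upwards [Iio_mem_nhds hs] with x hx using if_pos hx.le
  · have hd : glueDeriv d₁ d₂ (1 / 2) = 0 := by norm_num [glueDeriv]
    have hIic : HasDerivWithinAt (glue f₁ f₂) 0 (Set.Iic (1 / 2)) (1 / 2) := by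
      refine ((left _).hasDerivWithinAt.congr (fun x hx => if_pos (Set.mem_Iic.1 hx))
        ?_).congr_deriv ?_
      · simp
      · norm_num
    have hIci : HasDerivWithinAt (glue f₁ f₂) 0 (Set.Ici (1 / 2)) (1 / 2) := by
      refine ((right _).hasDerivWithinAt.congr (fun x hx => ?_) ?_).congr_deriv ?_
      · rcases (Set.mem_Ici.1 hx).eq_or_lt with rfl | hlt
        · norm_num [glue, h]
        · exact if_neg (not_le.2 hlt)
      · norm_num [glue, h]
      · norm_num
    rw [hd]
    simpa [Set.Iic_union_Ici] using hIic.union hIci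
  · rw [glueDeriv, if_neg (not_le.2 hs)]
    refine (right s).congr_of_eventuallyEq ?_
    filter_upwards [Ioi_mem_nhds hs] with x hx using if_neg (not_le.2 hx)

lemma integral_norm_reparamDeriv_smul (a : ℝ) {d : ℝ → X} (hd : Continuous d) :
    ∫ s in a / 2..(a + 1) / 2, ‖(2 * reparamDeriv (2 * s - a)) • d (reparam (2 * s - a))‖
      = ∫ u in (0 : ℝ)..1, ‖d u‖ := by
  have hnonneg (s : ℝ) : 0 ≤ 2 * reparamDeriv (2 * s - a) := by
    have := reparamDeriv_nonneg (2 * s - a); positivity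
  simp only [norm_smul, Real.norm_eq_abs, abs_of_nonneg (hnonneg _)]
  have h := intervalIntegral.integral_deriv_smul_comp (a := a / 2) (b := (a + 1) / 2)
    (fun s _ => hasDerivAt_reparam_two_mul_sub a s) (by fun_prop) hd.norm
  simp only [Function.comp_def, smul_eq_mul] at h
  rw [h]
  congr 1 <;> ring_nf <;> simp

end Append

variable (γ₁ γ₂ : HorizCurve n)

def append (h : γ₁.target = γ₂.source) : HorizCurve n where
  z := glue γ₁.z γ₂.z
  t := glue γ₁.t γ₂.t
  z' := glueDeriv γ₁.z' γ₂.z'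
  hz := hasDerivAt_glue γ₁.hz γ₂.hz (Prod.ext_iff.1 h).1
  ht s := by
    refine (hasDerivAt_glue γ₁.ht γ₂.ht (Prod.ext_iff.1 h).2 s).congr_deriv ?_
    unfold glue glueDeriv
    split_ifs <;> simp only [smul_eq_mul, im_herm_smul_right] <;> ring
  hz' := by
    have := γ₁.hz'
    have := γ₂.hz'
    refine Continuous.if_le (by fun_prop) (by fun_prop) continuous_id continuous_const ?_
    rintro x rfl
    norm_num

variable {γ₁ γ₂}

@[simp] lemma append_source (h : γ₁.target = γ₂.source) :
    (γ₁.append γ₂ h).source = γ₁.source := by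
  simp [append, source, glue]

@[simp] lemma append_target (h : γ₁.target = γ₂.source) :
    (γ₁.append γ₂ h).target = γ₂.target := by
  norm_num [append, target, glue]

lemma append_length (h : γ₁.target = γ₂.source) :
    (γ₁.append γ₂ h).length = γ₁.length + γ₂.length := by
  have hc : Continuous fun s => ‖(γ₁.append γ₂ h).z' s‖ := (γ₁.append γ₂ h).hz'.norm
  rw [length, ← intervalIntegral.integral_add_adjacent_intervals (b := 1 / 2)
    (hc.intervalIntegrable _ _) (hc.intervalIntegrable _ _)]
  have e₁ := integral_norm_reparamDeriv_smul 0 γ₁.hz'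
  have e₂ := integral_norm_reparamDeriv_smul 1 γ₂.hz'
  norm_num at e₁ e₂
  rw [length, length, ← e₁, ← e₂]
  congr 1
  · refine intervalIntegral.integral_congr fun s hs => ?_
    rw [Set.uIcc_of_le (by norm_num)] at hs
    simp only [append, glueDeriv, if_pos hs.2]
  · refine intervalIntegral.integral_congr fun s hs => ?_
    rw [Set.uIcc_of_le (by norm_num)] at hs
    rcases hs.1.eq_or_lt with rfl | hlt
    · norm_num [append, glueDeriv]
    · simp only [append, glueDeriv, if_neg (not_le.2 hlt)]

def reverse (γ : HorizCurve n) : HorizCurve n where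
  z s := γ.z (1 - s)
  t s := γ.t (1 - s)
  z' s := -γ.z' (1 - s)
  hz s := ((γ.hz (1 - s)).scomp s (hasDerivAt_one_sub s)).congr_deriv (neg_one_smul ℝ _)
  ht s := ((γ.ht (1 - s)).scomp s (hasDerivAt_one_sub s)).congr_deriv <| by
    simp [herm_neg_right]
  hz' := (γ.hz'.comp (continuous_const.sub continuous_id)).neg

@[simp] lemma reverse_source (γ : HorizCurve n) : γ.reverse.source = γ.target := by
  simp [reverse, source, target]

@[simp] lemma reverse_target (γ : HorizCurve n) : γ.reverse.target = γ.source := by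
  simp [reverse, source, target]

lemma reverse_length (γ : HorizCurve n) : γ.reverse.length = γ.length := by
  simp only [length, reverse, norm_neg]
  simpa using intervalIntegral.integral_comp_sub_left (a := 0) (b := 1) (fun u => ‖γ.z' u‖) 1

def mulLeft (a : Heis n) (γ : HorizCurve n) : HorizCurve n where
  z s := a.1 + γ.z s
  t s := a.2 + γ.t s + imHermCLM a.1 (γ.z s)
  z' := γ.z'
  hz s := (γ.hz s).const_add a.1
  ht s := ((γ.ht s).const_add a.2 |>.add
      ((imHermCLM a.1).hasFDerivAt.comp_hasDerivAt s (γ.hz s))).congr_deriv <| by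
    simp only [imHermCLM_apply, herm_add_left, Complex.add_im]; ring
  hz' := γ.hz'

@[simp] lemma mulLeft_source (a : Heis n) (γ : HorizCurve n) :
    (γ.mulLeft a).source = mul a γ.source := by
  simp [mulLeft, source, mul, imHermCLM_apply]

@[simp] lemma mulLeft_target (a : Heis n) (γ : HorizCurve n) :
    (γ.mulLeft a).target = mul a γ.target := by
  simp [mulLeft, target, mul, imHermCLM_apply]

lemma mulLeft_length (a : Heis n) (γ : HorizCurve n) : (γ.mulLeft a).length = γ.length := rfl

def dilate (l : ℝ) (γ : HorizCurve n) : HorizCurve n where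
  z s := l • γ.z s
  t s := l ^ 2 * γ.t s
  z' s := l • γ.z' s
  hz s := (γ.hz s).const_smul l
  ht s := ((γ.ht s).const_mul (l ^ 2)).congr_deriv <| by
    rw [im_herm_smul_left, im_herm_smul_right]; ring
  hz' := γ.hz'.const_smul l

lemma dilate_length (l : ℝ) (γ : HorizCurve n) : (γ.dilate l).length = |l| * γ.length := by
  simp only [length, dilate, norm_smul, Real.norm_eq_abs, intervalIntegral.integral_const_mul]

end HorizCurve

open HorizCurve

def lengthSet (p q : Heis n) : Set ℝ :=
  {L | ∃ γ : HorizCurve n, γ.source = p ∧ γ.target = q ∧ γ.length = L}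

lemma ccDist_eq_sInf (p q : Heis n) : ccDist p q = sInf (lengthSet p q) := by
  unfold ccDist lengthSet
  congr 1
  ext L
  simp only [source, target, Prod.ext_iff, and_assoc]
  exact exists_congr fun γ => by rw [eq_comm (a := L)]

lemma bddBelow_lengthSet (p q : Heis n) : BddBelow (lengthSet p q) :=
  ⟨0, by rintro _ ⟨γ, -, -, rfl⟩; exact γ.length_nonneg⟩

lemma ccDist_nonneg (p q : Heis n) : 0 ≤ ccDist p q := by
  rw [ccDist_eq_sInf]
  exact Real.sInf_nonneg (by rintro _ ⟨γ, -, -, rfl⟩; exact γ.length_nonneg)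

lemma ccDist_le_length (γ : HorizCurve n) : ccDist γ.source γ.target ≤ γ.length := by
  rw [ccDist_eq_sInf]
  exact csInf_le (bddBelow_lengthSet _ _) ⟨γ, rfl, rfl, rfl⟩

@[simp] lemma ccDist_self (p : Heis n) : ccDist p p = 0 :=
  le_antisymm (by simpa using ccDist_le_length (const p)) (ccDist_nonneg p p)

/-- `ℂ⁰` is a point, so every horizontal curve in `ℍ⁰` has length `0`. -/
lemma ccDist_nonpos_of_dim_zero (p q : Heis 0) : ccDist p q ≤ 0 := by
  rw [ccDist_eq_sInf]
  refine Real.sInf_nonpos ?_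
  rintro _ ⟨γ, -, -, rfl⟩
  simp [length, Subsingleton.elim (γ.z' _) 0]

lemma lengthSet_subset_swap (p q : Heis n) : lengthSet p q ⊆ lengthSet q p := by
  rintro _ ⟨γ, rfl, rfl, rfl⟩
  exact ⟨γ.reverse, by simp, by simp, γ.reverse_length⟩

lemma ccDist_comm (p q : Heis n) : ccDist p q = ccDist q p := by
  simp only [ccDist_eq_sInf,
    (lengthSet_subset_swap p q).antisymm (lengthSet_subset_swap q p)]

lemma mul_neg_mul_cancel_left (a x : Heis n) : mul (-a) (mul a x) = x := by
  ext1
  · simp [mul]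
  · simp only [mul, Prod.fst_neg, Prod.snd_neg, herm_neg_left, herm_add_right, Complex.neg_im,
      Complex.add_im, im_herm_self]
    ring

lemma mul_zero_right (p : Heis n) : mul p 0 = p := by
  simp [mul]

lemma dilation_zero_right (l : ℝ) : dilation l (0 : Heis n) = 0 := by
  simp [dilation]

lemma dilation_inv_dilation {l : ℝ} (hl : l ≠ 0) (x : Heis n) :
    dilation l⁻¹ (dilation l x) = x := by
  ext1
  · simp [dilation, smul_smul, hl]
  · simp [dilation]; field_simp

lemma lengthSet_subset_mul (a p q : Heis n) :
    lengthSet p q ⊆ lengthSet (mul a p) (mul a q) := by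
  rintro _ ⟨γ, rfl, rfl, rfl⟩
  exact ⟨γ.mulLeft a, by simp, by simp, γ.mulLeft_length a⟩

lemma ccDist_mul_left (a p q : Heis n) : ccDist (mul a p) (mul a q) = ccDist p q := by
  rw [ccDist_eq_sInf, ccDist_eq_sInf]
  refine congrArg sInf (Set.Subset.antisymm (fun L hL => ?_) (lengthSet_subset_mul a p q))
  simpa [mul_neg_mul_cancel_left] using lengthSet_subset_mul (-a) _ _ hL

lemma mul_mem_lengthSet_dilation {l L : ℝ} (hl : 0 ≤ l) {p q : Heis n}
    (hL : L ∈ lengthSet p q) : l * L ∈ lengthSet (dilation l p) (dilation l q) := by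
  obtain ⟨γ, rfl, rfl, rfl⟩ := hL
  exact ⟨γ.dilate l, rfl, rfl, by rw [dilate_length, abs_of_nonneg hl]⟩

open Pointwise in
lemma ccDist_dilation {l : ℝ} (hl : 0 < l) (p q : Heis n) :
    ccDist (dilation l p) (dilation l q) = l * ccDist p q := by
  have hset : lengthSet (dilation l p) (dilation l q) = l • lengthSet p q := by
    refine Set.Subset.antisymm (fun L hL => ⟨l⁻¹ * L, ?_, by simp [hl.ne']⟩) ?_
    · simpa [dilation_inv_dilation hl.ne'] using
        mul_mem_lengthSet_dilation (inv_nonneg.2 hl.le) hL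
    · rintro _ ⟨L, hL, rfl⟩
      exact mul_mem_lengthSet_dilation hl.le hL
  rw [ccDist_eq_sInf, ccDist_eq_sInf, hset, Real.sInf_smul_of_nonneg hl.le, smul_eq_mul]

lemma not_isLocalMax_ccDist {p y : Heis n} (hy : 0 < ccDist p y) : ¬IsLocalMax (ccDist p) y := by
  set w := mul (-p) y
  have hw : mul p w = y := by simpa using mul_neg_mul_cancel_left (-p) y
  have hdist (l : ℝ) (hl : 0 < l) : ccDist p (mul p (dilation l w)) = l * ccDist p y := by
    calc ccDist p (mul p (dilation l w)) = ccDist (mul p 0) (mul p (dilation l w)) := by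
          rw [mul_zero_right]
      _ = ccDist (dilation l 0) (dilation l w) := by rw [ccDist_mul_left, dilation_zero_right]
      _ = l * ccDist (mul p 0) (mul p w) := by rw [ccDist_dilation hl, ccDist_mul_left]
      _ = l * ccDist p y := by rw [mul_zero_right, hw]
  have hcont : Continuous fun l : ℝ => mul p (dilation l w) := by
    unfold mul dilation; fun_prop
  have hone : mul p (dilation 1 w) = y := by simpa [dilation] using hw
  intro hmax
  have hev : ∀ᶠ l in nhdsWithin (1 : ℝ) (Set.Ioi 1), ccDist p (mul p (dilation l w)) ≤ ccDist p y :=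
    nhdsWithin_le_nhds ((hone ▸ hcont.tendsto 1 : Filter.Tendsto _ _ (nhds y)).eventually hmax)
  obtain ⟨l, hle, hl⟩ := (hev.and self_mem_nhdsWithin).exists
  rw [hdist l (zero_lt_one.trans hl)] at hle
  nlinarith

/-- The length of a segment followed by a loop, joining `p` to `q`. -/
def ccDistBound (p q : Heis n) : ℝ := ‖q.1 - p.1‖ + √(π * |height p q|)

lemma continuous_ccDistBound : Continuous fun pq : Heis n × Heis n => ccDistBound pq.1 pq.2 := by
  unfold ccDistBound; fun_prop

@[simp] lemma ccDistBound_self (p : Heis n) : ccDistBound p p = 0 := by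
  simp [ccDistBound, height_self]

section NeZero

variable [NeZero n]

lemma exists_length_eq_ccDistBound (p q : Heis n) :
    ∃ γ : HorizCurve n, γ.source = p ∧ γ.target = q ∧ γ.length = ccDistBound p q := by
  let γ₁ := segment p q
  let γ₂ := loop q.1 γ₁.target.2 (height p q)
  have h : γ₁.target = γ₂.source := by simp [γ₁, γ₂]
  refine ⟨γ₁.append γ₂ h, by simp [γ₁], ?_, ?_⟩
  · ext1 <;> simp [γ₁, γ₂, height]
  · rw [append_length, segment_length, loop_length, ccDistBound]

lemma lengthSet_nonempty (p q : Heis n) : (lengthSet p q).Nonempty :=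
  let ⟨γ, hp, hq, _⟩ := exists_length_eq_ccDistBound p q
  ⟨γ.length, γ, hp, hq, rfl⟩

lemma ccDist_le_ccDistBound (p q : Heis n) : ccDist p q ≤ ccDistBound p q := by
  obtain ⟨γ, rfl, rfl, hγ⟩ := exists_length_eq_ccDistBound p q
  exact hγ ▸ ccDist_le_length γ

lemma exists_length_lt {p q : Heis n} {c : ℝ} (h : ccDist p q < c) :
    ∃ γ : HorizCurve n, γ.source = p ∧ γ.target = q ∧ γ.length < c := by
  rw [ccDist_eq_sInf] at h
  obtain ⟨_, ⟨γ, hp, hq, rfl⟩, hc⟩ := exists_lt_of_csInf_lt (lengthSet_nonempty p q) h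
  exact ⟨γ, hp, hq, hc⟩

lemma le_ccDist {p q : Heis n} {c : ℝ}
    (h : ∀ γ : HorizCurve n, γ.source = p → γ.target = q → c ≤ γ.length) : c ≤ ccDist p q := by
  rw [ccDist_eq_sInf]
  exact le_csInf (lengthSet_nonempty p q) (by rintro _ ⟨γ, hp, hq, rfl⟩; exact h γ hp hq)

lemma norm_sub_le_ccDist (p q : Heis n) : ‖q.1 - p.1‖ ≤ ccDist p q :=
  le_ccDist fun γ hp hq => hp ▸ hq ▸ γ.norm_target_sub_source_le

lemma abs_height_le_ccDist (p q : Heis n) : |height p q| ≤ 2 * ccDist p q ^ 2 := by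
  have h : √(|height p q| / 2) ≤ ccDist p q := le_ccDist fun γ hp hq => by
    have := hp ▸ hq ▸ γ.abs_height_le
    calc √(|height p q| / 2) ≤ √(γ.length ^ 2) := Real.sqrt_le_sqrt (by linarith)
      _ = γ.length := Real.sqrt_sq γ.length_nonneg
  nlinarith [Real.sq_sqrt (show 0 ≤ |height p q| / 2 by positivity),
    Real.sqrt_nonneg (|height p q| / 2)]

lemma ccDist_triangle (p q r : Heis n) : ccDist p r ≤ ccDist p q + ccDist q r := by
  refine le_of_forall_pos_lt_add fun ε hε => ?_
  obtain ⟨γ₁, hp, hq₁, h₁⟩ := exists_length_lt (lt_add_of_pos_right (ccDist p q) (half_pos hε))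
  obtain ⟨γ₂, hq₂, hr, h₂⟩ := exists_length_lt (lt_add_of_pos_right (ccDist q r) (half_pos hε))
  have h : γ₁.target = γ₂.source := hq₁.trans hq₂.symm
  calc ccDist p r ≤ (γ₁.append γ₂ h).length := by
        simpa [hp, hr] using ccDist_le_length (γ₁.append γ₂ h)
    _ < _ := by rw [append_length]; linarith

lemma continuous_ccDist (p : Heis n) : Continuous (ccDist p) := by
  refine continuous_iff_continuousAt.2 fun q₀ => ?_
  have hbound (q : Heis n) : |ccDist p q - ccDist p q₀| ≤ ccDistBound q₀ q := by
    have := ccDist_le_ccDistBound q₀ q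
    rw [abs_sub_le_iff]
    constructor
    · linarith [ccDist_triangle p q₀ q]
    · linarith [ccDist_triangle p q q₀, ccDist_comm q q₀]
  have hlim := (continuous_ccDistBound.comp (Continuous.prodMk_right q₀)).tendsto q₀
  simp only [Function.comp_def, ccDistBound_self] at hlim
  exact tendsto_iff_norm_sub_tendsto_zero.2 (squeeze_zero (fun _ => norm_nonneg _) hbound hlim)

lemma isOpen_ccBall (p : Heis n) (r : ℝ) : IsOpen (ccBall p r) :=
  isOpen_lt (continuous_ccDist p) continuous_const

end NeZero

lemma mem_ccBall_self (p : Heis n) {r : ℝ} (hr : 0 < r) : p ∈ ccBall p r := by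
  simpa [ccBall] using hr

section Diameter

lemma ccDist_le_ccDiam {F : Set (Heis n)} (hF : ccBounded F) {p q : Heis n} (hp : p ∈ F)
    (hq : q ∈ F) : ccDist p q ≤ ccDiam F := by
  obtain ⟨M, hM⟩ := hF
  exact le_csSup ⟨M, by rintro _ ⟨x, hx, y, hy, rfl⟩; exact hM x hx y hy⟩ ⟨p, hp, q, hq, rfl⟩

lemma ccDiam_le {F : Set (Heis n)} {D : ℝ} (hD : 0 ≤ D) (h : ∀ p ∈ F, ∀ q ∈ F, ccDist p q ≤ D) :
    ccDiam F ≤ D :=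
  Real.sSup_le (by rintro _ ⟨p, hp, q, hq, rfl⟩; exact h p hp q hq) hD

lemma ccDiam_mono {E F : Set (Heis n)} (hEF : E ⊆ F) (hE : E.Nonempty) (hF : ccBounded F) :
    ccDiam E ≤ ccDiam F := by
  obtain ⟨p, hp⟩ := hE
  obtain ⟨M, hM⟩ := hF
  refine csSup_le_csSup ⟨M, ?_⟩ ⟨_, p, hp, p, hp, rfl⟩ ?_
  · rintro _ ⟨x, hx, y, hy, rfl⟩; exact hM x hx y hy
  · rintro _ ⟨x, hx, y, hy, rfl⟩; exact ⟨x, hEF hx, y, hEF hy, rfl⟩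

lemma ccDiam_nonpos_of_dim_zero (F : Set (Heis 0)) : ccDiam F ≤ 0 :=
  Real.sSup_nonpos (by rintro _ ⟨p, -, q, -, rfl⟩; exact ccDist_nonpos_of_dim_zero p q)

lemma _root_.IsCompact.ccBounded [NeZero n] {E : Set (Heis n)} (hE : IsCompact E) :
    ccBounded E := by
  obtain ⟨C, hC⟩ := (hE.prod hE).exists_bound_of_continuousOn continuous_ccDistBound.continuousOn
  exact ⟨C, fun p hp q hq => (ccDist_le_ccDistBound p q).trans
    ((le_abs_self _).trans (hC (p, q) ⟨hp, hq⟩))⟩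

lemma ccDist_le_of_mem_union_ccBall [NeZero n] {E : Set (Heis n)} {p : Heis n} {D M r : ℝ}
    (hE : ∀ x ∈ E, ∀ y ∈ E, ccDist x y ≤ D) (hEp : ∀ x ∈ E, ccDist p x ≤ M)
    (hMr : M + r ≤ D) (hr : 2 * r ≤ D) :
    ∀ x ∈ E ∪ ccBall p r, ∀ y ∈ E ∪ ccBall p r, ccDist x y ≤ D := by
  have hball {x y : Heis n} {m : ℝ} (hx : ccDist p x ≤ m) (hy : y ∈ ccBall p r) :
      ccDist x y ≤ m + r := by
    have : ccDist p y < r := hy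
    linarith [ccDist_triangle x p y, ccDist_comm x p]
  rintro x (hx | hx) y (hy | hy)
  · exact hE x hx y hy
  · exact (hball (hEp x hx) hy).trans hMr
  · exact ccDist_comm x y ▸ (hball (hEp y hy) hx).trans hMr
  · exact (hball (le_of_lt hx) hy).trans (by linarith)

end Diameter

section Volume

instance : (volume : Measure (EuclideanSpace ℂ (Fin n))).IsAddHaarMeasure :=
  (PiLp.continuousLinearEquiv 2 ℝ (fun _ : Fin n => ℂ)).symm.isAddHaarMeasure_map volume

lemma finrank_euclideanSpace_complex :
    Module.finrank ℝ (EuclideanSpace ℂ (Fin n)) = 2 * n := by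
  rw [← Module.finrank_mul_finrank ℝ ℂ, finrank_euclideanSpace, Complex.finrank_real_complex,
    Fintype.card_fin]

/-- A set within distance `D` of `p` lies over the ball `B(p.1, D)` of `ℂⁿ`, within height
`2D²` of the horizontal plane through `p`. -/
lemma volume_le_of_forall_ccDist_le [NeZero n] {F : Set (Heis n)} {p : Heis n} {D : ℝ}
    (hD : 0 ≤ D) (hF : ∀ q ∈ F, ccDist p q ≤ D) :
    volume F ≤ ENNReal.ofReal (4 * D ^ (2 * n + 2)) *
      volume (Metric.ball (0 : EuclideanSpace ℂ (Fin n)) 1) := by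
  let g (z : EuclideanSpace ℂ (Fin n)) : ℝ := p.2 + 2 * (herm p.1 (z - p.1)).im
  have hg : Continuous g := by fun_prop
  have hsub : F ⊆ {x | x.1 ∈ Metric.closedBall p.1 D ∧ |x.2 - g x.1| ≤ 2 * D ^ 2} := by
    intro q hq
    refine ⟨?_, ?_⟩
    · rw [Metric.mem_closedBall, dist_eq_norm]
      exact (norm_sub_le_ccDist p q).trans (hF q hq)
    · have h1 := abs_height_le_ccDist p q
      have h2 : ccDist p q ^ 2 ≤ D ^ 2 := pow_le_pow_left₀ (ccDist_nonneg p q) (hF q hq) 2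
      have : q.2 - g q.1 = height p q := by simp only [g, height]; ring
      rw [this]; linarith
  calc volume F ≤ _ := measure_mono hsub
    _ = ENNReal.ofReal (2 * (2 * D ^ 2)) * volume (Metric.closedBall p.1 D) := by
      rw [Measure.volume_eq_prod, Measure.prod_volume_setOf_abs_sub_le _
        Metric.isClosed_closedBall.measurableSet hg.measurable]
    _ = _ := by
      rw [Measure.addHaar_closedBall _ _ hD, finrank_euclideanSpace_complex, ← mul_assoc,
        ← ENNReal.ofReal_mul (by positivity)]
      ring_nf

lemma volume_lt_top_of_ccBounded [NeZero n] {F : Set (Heis n)} (hF : ccBounded F) :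
    volume F < ⊤ := by
  rcases F.eq_empty_or_nonempty with rfl | ⟨p, hp⟩
  · simp
  obtain ⟨M, hM⟩ := hF
  refine (volume_le_of_forall_ccDist_le ((ccDist_nonneg p p).trans (hM p hp p hp))
    (hM p hp)).trans_lt (ENNReal.mul_lt_top ENNReal.ofReal_lt_top measure_ball_lt_top)

lemma volume_toReal_le_CI_mul [NeZero n] {F : Set (Heis n)} (hF : ccBounded F)
    (hd : 0 < ccDiam F) : (volume F).toReal ≤ CI n * ccDiam F ^ (2 * n + 2) := by
  set K := (volume (Metric.ball (0 : EuclideanSpace ℂ (Fin n)) 1)).toReal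
  have hbdd : BddAbove {x : ℝ | ∃ F : Set (Heis n), ccBounded F ∧ 0 < ccDiam F ∧
      x = (volume F).toReal / ccDiam F ^ (2 * n + 2)} := by
    refine ⟨4 * K, ?_⟩
    rintro _ ⟨G, hG, hGd, rfl⟩
    obtain ⟨p, hp⟩ : G.Nonempty := Set.nonempty_iff_ne_empty.2 fun h =>
      (ccDiam_le le_rfl (by simp [h])).not_gt hGd
    have hvol := volume_le_of_forall_ccDist_le hGd.le fun q hq => ccDist_le_ccDiam hG hp hq
    rw [div_le_iff₀ (by positivity)]
    calc (volume G).toReal ≤ (ENNReal.ofReal (4 * ccDiam G ^ (2 * n + 2)) *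
          volume (Metric.ball (0 : EuclideanSpace ℂ (Fin n)) 1)).toReal :=
          ENNReal.toReal_mono (ENNReal.mul_ne_top ENNReal.ofReal_ne_top measure_ball_lt_top.ne) hvol
      _ = 4 * K * ccDiam G ^ (2 * n + 2) := by
          rw [ENNReal.toReal_mul, ENNReal.toReal_ofReal (by positivity)]; ring
  rw [← div_le_iff₀ (by positivity)]
  exact le_csSup hbdd ⟨F, hF, hd, rfl⟩

end Volume

end Heis

/-- Every compact isodiametric set `E` satisfies the necessary condition (NC): for every
`p ∈ ∂E` there exists `q ∈ ∂E` with `d(p,q) = diam E`. -/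
theorem stmt13 (n : ℕ) (E : Set (Heis n)) (hE : IsCompact E)
    (hd : 0 < Heis.ccDiam E)
    (hiso : (volume E).toReal = Heis.CI n * Heis.ccDiam E ^ (2 * n + 2)) :
    ∀ p ∈ frontier E, ∃ q ∈ frontier E, Heis.ccDist p q = Heis.ccDiam E := by
  open Heis in
  intro p hp
  have : NeZero n := ⟨by rintro rfl; exact (ccDiam_nonpos_of_dim_zero E).not_gt hd⟩
  have hpE : p ∈ E := hE.isClosed.frontier_subset hp
  have hEb : ccBounded E := hE.ccBounded
  by_contra! hne
  obtain ⟨q, hq, hmax⟩ := hE.exists_mem_frontier_isMaxOn (continuous_ccDist p).continuousOn hp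
    fun y hy => not_isLocalMax_ccDist (by simpa using hy)
  set D := ccDiam E
  set M := ccDist p q
  have hMD : M < D :=
    (ccDist_le_ccDiam hEb hpE (hE.isClosed.frontier_subset hq)).lt_of_ne (hne q hq)
  set F := E ∪ ccBall p ((D - M) / 2)
  have hFD : ∀ x ∈ F, ∀ y ∈ F, ccDist x y ≤ D :=
    ccDist_le_of_mem_union_ccBall (fun x hx y hy => ccDist_le_ccDiam hEb hx hy)
      (fun x hx => hmax hx) (by linarith) (by linarith [ccDist_nonneg p q])
  have hFb : ccBounded F := ⟨D, hFD⟩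
  have hdiamF : ccDiam F = D :=
    (ccDiam_le hd.le hFD).antisymm (ccDiam_mono Set.subset_union_left ⟨p, hpE⟩ hFb)
  have hvol : volume E < volume F :=
    Measure.lt_measure_union_of_mem_frontier hE.isClosed (volume_lt_top_of_ccBounded hEb).ne
      (isOpen_ccBall p _) hp (mem_ccBall_self p (by linarith))
  have hCI := volume_toReal_le_CI_mul hFb (hdiamF ▸ hd)
  rw [hdiamF, ← hiso] at hCI
  exact hCI.not_gt (ENNReal.toReal_strict_mono (volume_lt_top_of_ccBounded hFb).ne hvol)
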